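/- arXiv:2310.11886 — 2 statements merged into one kernel-verified Lean document; each statement's English description precedes it below -/
import Mathlib

section
/- Let (Ω, μ) be a probability space, E and U finite sets, f : E → U, c : E → ℝ with c(e) ≥ 0 for all e, p ∈ (0,1), and (X_u)_{u∈U} mutually independent random variables, each taking values in {0,1} with μ(X_u = 1) = p. Define Ĉ = (1/p) · Σ_{e∈E} c(e) · X_{f(e)} and C = Σ_{e∈E} c(e). Then 𝔼[Ĉ] = C and Var[Ĉ] ≤ ((1 − p)/p) · C². -/
open MeasureTheory ProbabilityTheory

/-! Grouping the edges by their node rewrites the estimator as `(1 / p) ∑ᵤ C(u) X_u`, with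
`C(u)` the per-node count. The `X_u` are independent Bernoulli(`p`) variables, so the mean is
`∑ᵤ C(u) = C` and the variance is `(1 - p) / p · ∑ᵤ C(u)²`, which is at most
`(1 - p) / p · C²` because the `C(u)` are nonnegative. -/

theorem Finset.sum_mul_comp_eq_sum_fiberwise {E U R : Type*} [Fintype E] [Fintype U]
    [DecidableEq U] [NonUnitalNonAssocSemiring R] (f : E → U) (c : E → R) (g : U → R) :
    ∑ e, c e * g (f e) = ∑ u, (∑ e with f e = u, c e) * g u := by
  rw [← Finset.sum_fiberwise Finset.univ f]
  refine Finset.sum_congr rfl fun u _ => ?_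
  rw [Finset.sum_mul]
  exact Finset.sum_congr rfl fun e he => by rw [(Finset.mem_filter.1 he).2]

lemma eq_indicator_of_forall_eq_zero_or_one {α : Type*} {X : α → ℝ}
    (hX : ∀ a, X a = 0 ∨ X a = 1) : X = {a | X a = 1}.indicator 1 := by
  funext a
  rcases hX a with h | h <;> simp [Set.indicator, h]

section ZeroOne

variable {Ω : Type*} [MeasurableSpace Ω] {μ : Measure Ω} {X : Ω → ℝ}

lemma memLp_of_forall_eq_zero_or_one [IsFiniteMeasure μ] (hXm : Measurable X)
    (hX : ∀ ω, X ω = 0 ∨ X ω = 1) (q : ENNReal) : MemLp X q μ :=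
  memLp_of_bounded (a := 0) (b := 1)
    (.of_forall fun ω => by rcases hX ω with h | h <;> simp [h]) hXm.aestronglyMeasurable q

lemma integral_eq_measureReal_of_forall_eq_zero_or_one (hXm : Measurable X)
    (hX : ∀ ω, X ω = 0 ∨ X ω = 1) : ∫ ω, X ω ∂μ = μ.real {ω | X ω = 1} := by
  conv_lhs => rw [eq_indicator_of_forall_eq_zero_or_one hX]
  have hmeas : MeasurableSet {ω | X ω = 1} := hXm (measurableSet_singleton 1)
  rw [Pi.one_def, integral_indicator_const _ hmeas]
  simp

lemma variance_eq_of_forall_eq_zero_or_one [IsProbabilityMeasure μ] (hXm : Measurable X)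
    (hX : ∀ ω, X ω = 0 ∨ X ω = 1) :
    variance X μ = μ.real {ω | X ω = 1} * (1 - μ.real {ω | X ω = 1}) := by
  have hsq : X ^ 2 = X := funext fun ω => by rcases hX ω with h | h <;> simp [h]
  rw [variance_eq_sub (memLp_of_forall_eq_zero_or_one hXm hX 2), hsq,
    integral_eq_measureReal_of_forall_eq_zero_or_one hXm hX]
  ring

end ZeroOne

lemma variance_fun_sum_const_mul {Ω ι : Type*} [MeasurableSpace Ω] {μ : Measure Ω} [Fintype ι]
    {X : ι → Ω → ℝ} (hX : ∀ i, MemLp (X i) 2 μ) (hindep : Pairwise fun i j => X i ⟂ᵢ[μ] X j)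
    (a : ι → ℝ) :
    variance (fun ω => ∑ i, a i * X i ω) μ = ∑ i, a i ^ 2 * variance (X i) μ := by
  have hsum : (fun ω => ∑ i, a i * X i ω) = ∑ i, fun ω => a i * X i ω := by
    funext ω; simp
  rw [hsum, IndepFun.variance_sum (fun i _ => (hX i).const_mul (a i)) fun i _ j _ hij =>
    (hindep hij).comp (measurable_const_mul (a i)) (measurable_const_mul (a j))]
  simp_rw [variance_const_mul]

/-- Theorem 4.1 for TBC-N: the node-centric sampling estimator is unbiased and its
variance is at most `((1 - p) / p) * C ^ 2`. -/
theorem stmt_3 {Ω : Type*} [MeasurableSpace Ω] (μ : Measure Ω) [IsProbabilityMeasure μ]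
    {E U : Type*} [Fintype E] [Fintype U] (f : E → U)
    (c : E → ℝ) (hc : ∀ e, 0 ≤ c e)
    (p : ℝ) (hp : p ∈ Set.Ioo (0 : ℝ) 1)
    (X : U → Ω → ℝ) (hmeas : ∀ u, Measurable (X u))
    (hval : ∀ u ω, X u ω = 0 ∨ X u ω = 1)
    (hbern : ∀ u, μ {ω | X u ω = 1} = ENNReal.ofReal p)
    (hindep : iIndepFun X μ)
    (C : ℝ) (hC : C = ∑ e, c e) :
    (∫ ω, (1 / p) * ∑ e, c e * X (f e) ω ∂μ) = C ∧
      variance (fun ω => (1 / p) * ∑ e, c e * X (f e) ω) μ ≤ ((1 - p) / p) * C ^ 2 := by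
  classical
  obtain ⟨hp0, hp1⟩ := hp
  set a : U → ℝ := fun u => ∑ e with f e = u, c e
  have hregroup : ∀ ω, ∑ e, c e * X (f e) ω = ∑ u, a u * X u ω := fun ω =>
    Finset.sum_mul_comp_eq_sum_fiberwise f c (X · ω)
  have haC : ∑ u, a u = C := by rw [hC, ← Finset.sum_fiberwise Finset.univ f c]
  have hprob : ∀ u, μ.real {ω | X u ω = 1} = p := fun u => by
    simp [measureReal_def, hbern u, hp0.le]
  have hmean : ∀ u, ∫ ω, X u ω ∂μ = p := fun u => by
    rw [integral_eq_measureReal_of_forall_eq_zero_or_one (hmeas u) (hval u), hprob u]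
  have hvar : ∀ u, variance (X u) μ = p * (1 - p) := fun u => by
    rw [variance_eq_of_forall_eq_zero_or_one (hmeas u) (hval u), hprob u]
  have hmem : ∀ u, MemLp (X u) 2 μ := fun u =>
    memLp_of_forall_eq_zero_or_one (hmeas u) (hval u) 2
  simp_rw [hregroup]
  constructor
  · rw [integral_const_mul,
      integral_finsetSum _ fun u _ => ((hmem u).integrable one_le_two).const_mul _]
    simp_rw [integral_const_mul, hmean, ← Finset.sum_mul, haC]
    field_simp
  · rw [variance_const_mul, variance_fun_sum_const_mul hmem fun u v huv => hindep.indepFun huv]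
    have hsq : ∑ u, a u ^ 2 ≤ C ^ 2 :=
      haC ▸ Finset.sum_sq_le_sq_sum_of_nonneg fun u _ => Finset.sum_nonneg fun e _ => hc e
    calc (1 / p) ^ 2 * ∑ u, a u ^ 2 * variance (X u) μ = (1 - p) / p * ∑ u, a u ^ 2 := by
          simp_rw [hvar, ← Finset.sum_mul]; field_simp
      _ ≤ (1 - p) / p * C ^ 2 := by gcongr
end

section
/- Let (Ω, μ) be a probability space, ε, δ ∈ (0,1), E a finite set with |E| = m ≥ 1, a : E → ℝ with a(e) ≥ 0 for all e and C = Σ_{e∈E} a(e) > 0. Let s ≥ 1 be an integer with s ≥ (m − 1)/(δε²), and let Y_1, …, Y_s : Ω → E be mutually independent random variables, each uniformly distributed on E. Define Ĉ = (1/s) · Σ_{j=1}^{s} m · a(Y_j). Then μ( |Ĉ − C| ≥ εC ) ≤ δ. -/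
/-!
Each term `m · a(Y_j)` has mean `C`, since the uniform law weighs every `e` by `1/m`, and variance
`m Σ a² - C² ≤ (m - 1) C²`, because `Σ a² ≤ (Σ a)²` for nonnegative `a`. By independence the
sample mean `Ĉ` has variance at most `(m - 1) C² / s`, and Chebyshev's inequality at deviation `εC`
bounds the failure probability by `(m - 1) / (s ε²) ≤ δ`.
-/

open MeasureTheory ProbabilityTheory
open scoped ENNReal

section SampleMean

variable {Ω ι : Type*} [MeasurableSpace Ω] {μ : Measure Ω} [IsFiniteMeasure μ]
  [Fintype ι] [Nonempty ι] {X : ι → Ω → ℝ}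

theorem meas_le_abs_sampleMean_sub_le (hX : ∀ i, MemLp (X i) 2 μ)
    (hindep : Pairwise fun i j => X i ⟂ᵢ[μ] X j) {c v : ℝ} (hmean : ∀ i, μ[X i] = c)
    (hvar : ∀ i, Var[X i; μ] ≤ v) {t : ℝ} (ht : 0 < t) :
    μ {ω | t ≤ |(1 / (Fintype.card ι : ℝ)) * (∑ i, X i ω) - c|} ≤
      ENNReal.ofReal (v / (Fintype.card ι * t ^ 2)) := by
  have hn : (0 : ℝ) < Fintype.card ι := Nat.cast_pos.mpr Fintype.card_pos
  set M : Ω → ℝ := fun ω => (1 / (Fintype.card ι : ℝ)) * ∑ i, X i ω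
  have hM : MemLp M 2 μ := (memLp_finsetSum _ fun i _ => hX i).const_mul _
  have hMmean : μ[M] = c := by
    simp only [M, integral_const_mul, integral_finsetSum _ fun i _ => (hX i).integrable one_le_two,
      hmean, Finset.sum_const, Finset.card_univ, nsmul_eq_mul]
    field_simp
  have hMvar : Var[M; μ] ≤ v / Fintype.card ι := calc
    Var[M; μ] = (1 / (Fintype.card ι : ℝ)) ^ 2 * ∑ i, Var[X i; μ] := by
      rw [variance_const_mul, ← IndepFun.variance_sum (fun i _ => hX i)
        fun i _ j _ hij => hindep hij, Finset.sum_fn]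
    _ ≤ (1 / (Fintype.card ι : ℝ)) ^ 2 * (Fintype.card ι * v) := by
      gcongr
      simpa using Finset.sum_le_card_nsmul Finset.univ _ v fun i _ => hvar i
    _ = v / Fintype.card ι := by field_simp
  calc μ {ω | t ≤ |M ω - c|} = μ {ω | t ≤ |M ω - μ[M]|} := by rw [hMmean]
    _ ≤ ENNReal.ofReal (Var[M; μ] / t ^ 2) := meas_ge_le_variance_div_sq hM ht
    _ ≤ ENNReal.ofReal (v / (Fintype.card ι * t ^ 2)) := by
      rw [← div_div]
      gcongr

end SampleMean

section UniformSample

variable {Ω E : Type*} [MeasurableSpace Ω] {μ : Measure Ω} [Fintype E] [MeasurableSpace E]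
  [MeasurableSingletonClass E] {Y : Ω → E}

theorem integral_comp_eq_of_uniform [IsFiniteMeasure μ] (hY : Measurable Y)
    (hunif : ∀ e, μ {ω | Y ω = e} = (Fintype.card E : ℝ≥0∞)⁻¹) (g : E → ℝ) :
    ∫ ω, g (Y ω) ∂μ = (Fintype.card E : ℝ)⁻¹ * ∑ e, g e := by
  rw [← integral_map hY.aemeasurable (measurable_of_countable g).aestronglyMeasurable,
    integral_fintype .of_finite, Finset.mul_sum]
  refine Finset.sum_congr rfl fun e _ => ?_
  rw [Measure.real, Measure.map_apply hY (measurableSet_singleton e)]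
  simp [Set.preimage, hunif]

theorem memLp_comp_of_finite [IsFiniteMeasure μ] (hY : Measurable Y) (g : E → ℝ) (p : ℝ≥0∞) :
    MemLp (fun ω => g (Y ω)) p μ :=
  MemLp.of_discrete.comp_of_map hY.aemeasurable

variable [Nonempty E]

theorem integral_card_mul_comp_of_uniform [IsFiniteMeasure μ] (hY : Measurable Y)
    (hunif : ∀ e, μ {ω | Y ω = e} = (Fintype.card E : ℝ≥0∞)⁻¹) (a : E → ℝ) :
    ∫ ω, Fintype.card E * a (Y ω) ∂μ = ∑ e, a e := by
  rw [integral_comp_eq_of_uniform hY hunif fun e => Fintype.card E * a e, ← Finset.mul_sum,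
    inv_mul_cancel_left₀]
  exact Nat.cast_ne_zero.mpr Fintype.card_ne_zero

theorem variance_card_mul_comp_of_uniform [IsProbabilityMeasure μ] (hY : Measurable Y)
    (hunif : ∀ e, μ {ω | Y ω = e} = (Fintype.card E : ℝ≥0∞)⁻¹) (a : E → ℝ) :
    Var[fun ω => Fintype.card E * a (Y ω); μ] = Fintype.card E * ∑ e, a e ^ 2 - (∑ e, a e) ^ 2 := by
  rw [variance_eq_sub (memLp_comp_of_finite hY (fun e => Fintype.card E * a e) 2),
    integral_card_mul_comp_of_uniform hY hunif]
  simp only [Pi.pow_apply, mul_pow]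
  rw [integral_comp_eq_of_uniform hY hunif fun e => (Fintype.card E : ℝ) ^ 2 * a e ^ 2,
    ← Finset.mul_sum]
  field_simp

theorem variance_card_mul_comp_of_uniform_le [IsProbabilityMeasure μ] (hY : Measurable Y)
    (hunif : ∀ e, μ {ω | Y ω = e} = (Fintype.card E : ℝ≥0∞)⁻¹) {a : E → ℝ} (ha : ∀ e, 0 ≤ a e) :
    Var[fun ω => Fintype.card E * a (Y ω); μ] ≤ (Fintype.card E - 1) * (∑ e, a e) ^ 2 := by
  rw [variance_card_mul_comp_of_uniform hY hunif]
  have := Finset.sum_sq_le_sq_sum_of_nonneg fun e (_ : e ∈ Finset.univ) => ha e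
  nlinarith

end UniformSample

/-- Chebyshev-based sample-size bound for TBC-I (proof of Theorem 4.3): with
`s ≥ (m - 1)/(δ ε²)` uniform samples, the estimator is an (ε, δ)-approximation of `C`. -/
theorem stmt_8 {Ω : Type*} [MeasurableSpace Ω] (μ : Measure Ω) [IsProbabilityMeasure μ]
    (ε δ : ℝ) (hε : ε ∈ Set.Ioo (0 : ℝ) 1) (hδ : δ ∈ Set.Ioo (0 : ℝ) 1)
    {E : Type*} [Fintype E] [Nonempty E] [MeasurableSpace E] [MeasurableSingletonClass E]
    (m : ℕ) (hm : m = Fintype.card E)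
    (a : E → ℝ) (ha : ∀ e, 0 ≤ a e)
    (C : ℝ) (hC : C = ∑ e, a e) (hCpos : 0 < C)
    (s : ℕ) (hs : 1 ≤ s) (hslb : ((m : ℝ) - 1) / (δ * ε ^ 2) ≤ (s : ℝ))
    (Y : Fin s → Ω → E) (hmeas : ∀ j, Measurable (Y j))
    (hunif : ∀ j e, μ {ω | Y j ω = e} = (m : ENNReal)⁻¹)
    (hindep : iIndepFun Y μ) :
    μ {ω | ε * C ≤ |(1 / (s : ℝ)) * (∑ j, (m : ℝ) * a (Y j ω)) - C|}
      ≤ ENNReal.ofReal δ := by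
  obtain ⟨hε0, -⟩ := hε
  obtain ⟨hδ0, -⟩ := hδ
  subst hm hC
  have : Nonempty (Fin s) := ⟨⟨0, hs⟩⟩
  have hchebyshev := meas_le_abs_sampleMean_sub_le
    (X := fun j ω => Fintype.card E * a (Y j ω))
    (fun j => memLp_comp_of_finite (hmeas j) (fun e => Fintype.card E * a e) 2)
    (fun i j hij => (hindep.comp (fun _ e => Fintype.card E * a e)
      fun _ => measurable_of_countable _).indepFun hij)
    (fun j => integral_card_mul_comp_of_uniform (hmeas j) (hunif j) a)
    (fun j => variance_card_mul_comp_of_uniform_le (hmeas j) (hunif j) ha)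
    (mul_pos hε0 hCpos)
  rw [Fintype.card_fin] at hchebyshev
  refine hchebyshev.trans (ENNReal.ofReal_le_ofReal ?_)
  rw [div_le_iff₀ (by positivity)] at hslb ⊢
  calc ((Fintype.card E : ℝ) - 1) * (∑ e, a e) ^ 2
      ≤ s * (δ * ε ^ 2) * (∑ e, a e) ^ 2 := by gcongr
    _ = δ * (s * (ε * ∑ e, a e) ^ 2) := by ring
end
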